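/- Let g be a real metric Lie algebra with orthogonal decomposition g = ⊕ⱼ₌₁^k gⱼ into irreducible factors, and suppose g has no non-zero abelian factor. Then every orthogonal bi-invariant complex structure J on g satisfies J(gⱼ) = gⱼ for each j, and the complex Lie algebras (gⱼ, J|_{gⱼ}) are precisely the irreducible factors of the complex metric Lie algebra (g,J). -/

import Mathlib

open scoped RealInnerProductSpace TensorProduct

/-- A metric Lie algebra: a real Lie algebra equipped with a positive definite inner product. -/
class MetricLieAlgebra (g : Type*) [LieRing g] [LieAlgebra ℝ g] [Inner ℝ g] : Prop where
  inner_add_left : ∀ x y z : g, ⟪x + y, z⟫ = ⟪x, z⟫ + ⟪y, z⟫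
  inner_smul_left : ∀ (r : ℝ) (x y : g), ⟪r • x, y⟫ = r * ⟪x, y⟫
  inner_symm : ∀ x y : g, ⟪x, y⟫ = ⟪y, x⟫
  inner_self_pos : ∀ x : g, x ≠ 0 → 0 < ⟪x, x⟫

variable {g : Type*} [LieRing g] [LieAlgebra ℝ g] [Inner ℝ g]

/-- An orthogonal factor: an ideal admitting a complementary ideal orthogonal to it. -/
def IsOrthogonalFactor (h : LieIdeal ℝ g) : Prop :=
  ∃ h' : LieIdeal ℝ g, (∀ x ∈ h, ∀ y ∈ h', ⟪x, y⟫ = 0) ∧ h ⊔ h' = ⊤ ∧ h ⊓ h' = ⊥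

/-- An orthogonal projection of a metric Lie algebra. -/
def IsOrthogonalProjection (p : g →ₗ[ℝ] g) : Prop :=
  (∀ x y : g, p ⁅x, y⁆ = ⁅p x, p y⁆) ∧ p ∘ₗ p = p ∧
  (∀ x y : g, p ⁅x, y⁆ = ⁅p x, y⁆) ∧ ∀ x y : g, ⟪p x, y⟫ = ⟪x, p y⟫

/-- An orthogonal bi-invariant complex structure. -/
def IsOrthBiinvCplxStruct (J : g →ₗ[ℝ] g) : Prop :=
  (∀ x : g, J (J x) = -x) ∧ (∀ x y : g, J ⁅x, y⁆ = ⁅J x, y⁆) ∧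
    ∀ x y : g, ⟪J x, J y⟫ = ⟪x, y⟫

/-- An irreducible orthogonal factor. -/
def IsIrreducibleFactor (h : LieIdeal ℝ g) : Prop :=
  IsOrthogonalFactor h ∧ h ≠ ⊥ ∧
    ∀ k : LieIdeal ℝ g, k ≤ h → IsOrthogonalFactor k → k = ⊥ ∨ k = h

/-- A complex factor of `(g,J)`: an orthogonal factor which is `J`-invariant. -/
def IsComplexFactor (J : g →ₗ[ℝ] g) (h : LieIdeal ℝ g) : Prop :=
  IsOrthogonalFactor h ∧ ∀ x ∈ h, J x ∈ h

/-- An irreducible complex factor of `(g,J)`. -/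
def IsComplexIrreducibleFactor (J : g →ₗ[ℝ] g) (h : LieIdeal ℝ g) : Prop :=
  IsComplexFactor J h ∧ h ≠ ⊥ ∧
    ∀ k : LieIdeal ℝ g, k ≤ h → IsComplexFactor J k → k = ⊥ ∨ k = h

/-!
A linear map `A` with `A ⁅x, y⁆ = ⁅A x, y⁆` also satisfies `A ⁅x, y⁆ = ⁅x, A y⁆`, so for two such
maps `A`, `B` the commutator `D = AB - BA` kills `[g, g]` and, being of the same kind, takes
values in the centre. If `Z(g) ⊆ [g, g]` this gives `D ∘ D = 0`, and when `A`, `B` are self- or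
skew-adjoint so is `D`, whence `|D x|² = ±⟪x, D (D x)⟫ = 0`. Applied to `J` and the orthogonal
projection onto a factor, this shows that `J` preserves every orthogonal factor; applied to two
such projections, it shows that the factors `h` and `k` meet in a factor `h ⊓ k` with
`k = (h ⊓ k) ⊕ (h' ⊓ k)`. So each irreducible `gⱼ` lies in `h` or in its complement `h'`, and an
irreducible complex factor `h` contains, hence equals, some `gⱼ`.
-/

namespace MetricLieAlgebra

variable [MetricLieAlgebra g]

theorem inner_add_right (x y z : g) : ⟪x, y + z⟫ = ⟪x, y⟫ + ⟪x, z⟫ := by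
  rw [inner_symm, inner_add_left, inner_symm y, inner_symm z]

theorem inner_neg_left (x y : g) : ⟪-x, y⟫ = -⟪x, y⟫ := by
  rw [← neg_one_smul ℝ x, inner_smul_left, neg_one_mul]

theorem inner_neg_right (x y : g) : ⟪x, -y⟫ = -⟪x, y⟫ := by
  rw [inner_symm, inner_neg_left, inner_symm]

theorem inner_sub_left (x y z : g) : ⟪x - y, z⟫ = ⟪x, z⟫ - ⟪y, z⟫ := by
  rw [sub_eq_add_neg, inner_add_left, inner_neg_left, sub_eq_add_neg]

theorem inner_sub_right (x y z : g) : ⟪x, y - z⟫ = ⟪x, y⟫ - ⟪x, z⟫ := by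
  rw [inner_symm, inner_sub_left, inner_symm y, inner_symm z]

theorem inner_zero_right (x : g) : ⟪x, (0 : g)⟫ = 0 := by
  simpa using inner_sub_right x 0 0

theorem eq_zero_of_inner_self_eq_zero {x : g} (hx : ⟪x, x⟫ = 0) : x = 0 := by
  by_contra hne
  exact (inner_self_pos x hne).ne' hx

end MetricLieAlgebra

theorem map_lie_eq_lie_map_right {R L : Type*} [CommRing R] [LieRing L] [LieAlgebra R L]
    {A : L →ₗ[R] L} (hA : ∀ x y : L, A ⁅x, y⁆ = ⁅A x, y⁆) (x y : L) :
    A ⁅x, y⁆ = ⁅x, A y⁆ := by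
  rw [← lie_skew, map_neg, hA, ← lie_skew, neg_neg]

theorem derived_le_ker_of_map_lie_eq_zero {R L M : Type*} [CommRing R] [LieRing L] [LieAlgebra R L]
    [AddCommGroup M] [Module R M] {S : L →ₗ[R] M} (hS : ∀ x y : L, S ⁅x, y⁆ = 0) :
    (⁅(⊤ : LieIdeal R L), (⊤ : LieIdeal R L)⁆ : LieIdeal R L).toSubmodule ≤ LinearMap.ker S := by
  rw [LieSubmodule.lieIdeal_oper_eq_linear_span', Submodule.span_le]
  rintro _ ⟨x, -, y, -, rfl⟩
  exact hS x y

/-- `IsOrthogonalFactor h` unfolds to `∃ h', IsOrthCompl h h'`. -/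
def IsOrthCompl (h h' : LieIdeal ℝ g) : Prop :=
  (∀ x ∈ h, ∀ y ∈ h', ⟪x, y⟫ = 0) ∧ h ⊔ h' = ⊤ ∧ h ⊓ h' = ⊥

namespace IsOrthCompl

variable {h h' : LieIdeal ℝ g} (hc : IsOrthCompl h h')
include hc

theorem isCompl : IsCompl h.toSubmodule h'.toSubmodule :=
  LieSubmodule.isCompl_toSubmodule.2 ⟨disjoint_iff.2 hc.2.2, codisjoint_iff.2 hc.2.1⟩

noncomputable def proj : g →ₗ[ℝ] g :=
  Submodule.projection _ _ hc.isCompl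

theorem proj_mem (x : g) : hc.proj x ∈ h :=
  Submodule.projection_apply_mem _ x

theorem proj_eq_self {x : g} (hx : x ∈ h) : hc.proj x = x :=
  Submodule.projection_apply_of_mem_left _ hx

theorem proj_eq_zero {x : g} (hx : x ∈ h') : hc.proj x = 0 :=
  Submodule.projection_apply_of_mem_right _ hx

theorem sub_proj_mem (x : g) : x - hc.proj x ∈ h' :=
  Submodule.sub_projection_mem _ x

theorem proj_eq_of_sub_mem {x a : g} (ha : a ∈ h) (hxa : x - a ∈ h') : hc.proj x = a := by
  rw [← sub_add_cancel x a, map_add, hc.proj_eq_zero hxa, zero_add, hc.proj_eq_self ha]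

theorem isOrthogonalProjection_proj [MetricLieAlgebra g] : IsOrthogonalProjection hc.proj := by
  have lie_left : ∀ x y, hc.proj ⁅x, y⁆ = ⁅hc.proj x, y⁆ := fun x y =>
    hc.proj_eq_of_sub_mem (lie_mem_left _ _ _ _ _ (hc.proj_mem x))
      (by rw [← sub_lie]; exact lie_mem_left _ _ _ _ _ (hc.sub_proj_mem x))
  have inner_proj : ∀ x y, ⟪hc.proj x, y⟫ = ⟪hc.proj x, hc.proj y⟫ := fun x y => by
    have := hc.1 _ (hc.proj_mem x) _ (hc.sub_proj_mem y)
    rwa [MetricLieAlgebra.inner_sub_right, sub_eq_zero] at this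
  have idem : hc.proj ∘ₗ hc.proj = hc.proj :=
    LinearMap.ext fun x => hc.proj_eq_self (hc.proj_mem x)
  refine ⟨fun x y => ?_, idem, lie_left, fun x y => ?_⟩
  · rw [← lie_left, ← map_lie_eq_lie_map_right lie_left, ← LinearMap.comp_apply, idem]
  · rw [inner_proj, MetricLieAlgebra.inner_symm x, inner_proj y x, MetricLieAlgebra.inner_symm]

end IsOrthCompl

theorem IsOrthBiinvCplxStruct.inner_map_left [MetricLieAlgebra g] {J : g →ₗ[ℝ] g}
    (hJ : IsOrthBiinvCplxStruct J) (x y : g) : ⟪J x, y⟫ = -⟪x, J y⟫ := by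
  rw [← hJ.2.2 x (J y), hJ.1, MetricLieAlgebra.inner_neg_right, neg_neg]

section NoAbelianFactor

variable [MetricLieAlgebra g] (hZ : LieAlgebra.center ℝ g ≤ ⁅(⊤ : LieIdeal ℝ g), ⊤⁆)
  {h h' k k' : LieIdeal ℝ g}
include hZ

theorem comp_comm_of_map_lie {A B : g →ₗ[ℝ] g} {a b : ℝ}
    (hA : ∀ x y, A ⁅x, y⁆ = ⁅A x, y⁆) (hB : ∀ x y, B ⁅x, y⁆ = ⁅B x, y⁆)
    (hA' : ∀ x y, ⟪A x, y⟫ = a * ⟪x, A y⟫) (hB' : ∀ x y, ⟪B x, y⟫ = b * ⟪x, B y⟫) :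
    A ∘ₗ B = B ∘ₗ A := by
  set D := A ∘ₗ B - B ∘ₗ A with hD
  have hD_lie : ∀ x y, D ⁅x, y⁆ = 0 := fun x y => by
    simp only [hD, LinearMap.sub_apply, LinearMap.comp_apply]
    rw [map_lie_eq_lie_map_right hB, hA, hA, map_lie_eq_lie_map_right hB, sub_self]
  have hD_center : ∀ x, D x ∈ LieAlgebra.center ℝ g := fun x => by
    refine (LieModule.mem_maxTrivSubmodule ℝ g g _).2 fun y => ?_
    simp only [hD, LinearMap.sub_apply, LinearMap.comp_apply, lie_sub]
    rw [← map_lie_eq_lie_map_right hA, ← map_lie_eq_lie_map_right hB,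
      ← map_lie_eq_lie_map_right hB, ← map_lie_eq_lie_map_right hA]
    exact hD_lie y x
  have hD_adj : ∀ x y, ⟪D x, y⟫ = -(a * b) * ⟪x, D y⟫ := fun x y => by
    simp only [hD, LinearMap.sub_apply, LinearMap.comp_apply, MetricLieAlgebra.inner_sub_left,
      MetricLieAlgebra.inner_sub_right]
    rw [hA', hB', hB', hA']
    ring
  refine LinearMap.ext fun x => sub_eq_zero.1 (MetricLieAlgebra.eq_zero_of_inner_self_eq_zero ?_)
  have hDD : D (D x) = 0 := derived_le_ker_of_map_lie_eq_zero hD_lie (hZ (hD_center x))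
  show ⟪D x, D x⟫ = 0
  rw [hD_adj, hDD, MetricLieAlgebra.inner_zero_right, mul_zero]

theorem IsOrthogonalProjection.comp_comm {p q : g →ₗ[ℝ] g}
    (hp : IsOrthogonalProjection p) (hq : IsOrthogonalProjection q) :
    p ∘ₗ q = q ∘ₗ p :=
  comp_comm_of_map_lie hZ (a := 1) (b := 1) hp.2.2.1 hq.2.2.1
    (by simpa using hp.2.2.2) (by simpa using hq.2.2.2)

theorem IsOrthogonalProjection.comp_comm_of_isOrthBiinvCplxStruct {p J : g →ₗ[ℝ] g}
    (hp : IsOrthogonalProjection p) (hJ : IsOrthBiinvCplxStruct J) :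
    p ∘ₗ J = J ∘ₗ p :=
  comp_comm_of_map_lie hZ (a := 1) (b := -1) hp.2.2.1 hJ.2.1
    (by simpa using hp.2.2.2) (by simpa using hJ.inner_map_left)

theorem IsOrthCompl.proj_proj_comm (hc : IsOrthCompl h h') (kc : IsOrthCompl k k') (x : g) :
    hc.proj (kc.proj x) = kc.proj (hc.proj x) :=
  LinearMap.congr_fun
    (hc.isOrthogonalProjection_proj.comp_comm hZ kc.isOrthogonalProjection_proj) x

theorem IsOrthogonalFactor.map_mem_of_isOrthBiinvCplxStruct (hh : IsOrthogonalFactor h)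
    {J : g →ₗ[ℝ] g} (hJ : IsOrthBiinvCplxStruct J) {x : g} (hx : x ∈ h) : J x ∈ h := by
  obtain ⟨h', hc : IsOrthCompl h h'⟩ := hh
  have hcomm := LinearMap.congr_fun
    (hc.isOrthogonalProjection_proj.comp_comm_of_isOrthBiinvCplxStruct hZ hJ) x
  rw [LinearMap.comp_apply, LinearMap.comp_apply, hc.proj_eq_self hx] at hcomm
  exact hcomm ▸ hc.proj_mem (J x)

theorem IsOrthCompl.inf_sup (hc : IsOrthCompl h h') (kc : IsOrthCompl k k') :
    IsOrthCompl (h ⊓ k) (h' ⊔ k') := by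
  have horth : ∀ x ∈ h ⊓ k, ∀ y ∈ h' ⊔ k', ⟪x, y⟫ = 0 := by
    rintro x ⟨hxh, hxk⟩ y hy
    obtain ⟨a, ha, b, hb, rfl⟩ := (LieSubmodule.mem_sup _ _ _).1 hy
    rw [MetricLieAlgebra.inner_add_right, hc.1 x hxh a ha, kc.1 x hxk b hb, add_zero]
  refine ⟨horth, eq_top_iff.2 fun x _ => (LieSubmodule.mem_sup _ _ _).2
    ⟨hc.proj (kc.proj x), ?_, x - hc.proj (kc.proj x), ?_, add_sub_cancel _ _⟩, ?_⟩
  · exact ⟨hc.proj_mem _, hc.proj_proj_comm hZ kc x ▸ kc.proj_mem _⟩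
  · have hsplit : x - hc.proj (kc.proj x) =
        (x - hc.proj x) + (hc.proj x - kc.proj (hc.proj x)) := by
      rw [hc.proj_proj_comm hZ kc]; abel
    rw [hsplit]
    exact add_mem (LieSubmodule.mem_sup_left (hc.sub_proj_mem x))
      (LieSubmodule.mem_sup_right (kc.sub_proj_mem _))
  · exact (LieSubmodule.eq_bot_iff _).2 fun x hx =>
      MetricLieAlgebra.eq_zero_of_inner_self_eq_zero (horth x hx.1 x hx.2)

theorem IsOrthCompl.le_inf_sup_inf (hc : IsOrthCompl h h') (kc : IsOrthCompl k k') :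
    k ≤ (h ⊓ k) ⊔ (h' ⊓ k) := by
  intro y hy
  have hpy : hc.proj y ∈ k := by
    rw [← kc.proj_eq_self hy, hc.proj_proj_comm hZ kc]
    exact kc.proj_mem _
  exact (LieSubmodule.mem_sup _ _ _).2 ⟨hc.proj y, ⟨hc.proj_mem y, hpy⟩, y - hc.proj y,
    ⟨hc.sub_proj_mem y, sub_mem hy hpy⟩, add_sub_cancel _ _⟩

theorem IsIrreducibleFactor.le_or_le (hk : IsIrreducibleFactor k) (hc : IsOrthCompl h h') :
    k ≤ h ∨ k ≤ h' := by
  obtain ⟨k', kc⟩ := hk.1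
  rcases hk.2.2 (h ⊓ k) inf_le_right ⟨_, hc.inf_sup hZ kc⟩ with hbot | heq
  · right
    calc k ≤ (h ⊓ k) ⊔ (h' ⊓ k) := hc.le_inf_sup_inf hZ kc
      _ ≤ h' := by rw [hbot, bot_sup_eq]; exact inf_le_left
  · exact Or.inl (inf_eq_right.1 heq)

end NoAbelianFactor

theorem stmt15_general (g : Type*) [LieRing g] [LieAlgebra ℝ g] [Inner ℝ g]
    [MetricLieAlgebra g]
    (hZ : ∀ x : g, (∀ y : g, ⁅x, y⁆ = 0) →
      x ∈ ⁅(⊤ : LieIdeal ℝ g), (⊤ : LieIdeal ℝ g)⁆)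
    (k : ℕ) (G : Fin k → LieIdeal ℝ g)
    (hirr : ∀ j, IsIrreducibleFactor (G j))
    (hsup : (⨆ j, G j) = ⊤)
    (J : g →ₗ[ℝ] g) (hJ : IsOrthBiinvCplxStruct J) :
    (∀ j, ∀ x ∈ G j, J x ∈ G j) ∧
    (∀ j, IsComplexIrreducibleFactor J (G j)) ∧
    (∀ h : LieIdeal ℝ g, IsComplexIrreducibleFactor J h → ∃ j, h = G j) := by
  have hZ' : LieAlgebra.center ℝ g ≤ ⁅(⊤ : LieIdeal ℝ g), ⊤⁆ := fun x hx =>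
    hZ x fun y => by rw [← lie_skew, (LieModule.mem_maxTrivSubmodule ℝ g g x).1 hx y, neg_zero]
  have hJG : ∀ j, ∀ x ∈ G j, J x ∈ G j := fun j _ =>
    (hirr j).1.map_mem_of_isOrthBiinvCplxStruct hZ' hJ
  have hcplx : ∀ j, IsComplexIrreducibleFactor J (G j) := fun j =>
    ⟨⟨(hirr j).1, hJG j⟩, (hirr j).2.1, fun l hl hlc => (hirr j).2.2 l hl hlc.1⟩
  refine ⟨hJG, hcplx, fun h ⟨⟨⟨h', hc⟩, _⟩, hne, hmin⟩ => ?_⟩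
  obtain ⟨j, hj⟩ : ∃ j, G j ≤ h := by
    by_contra! hG
    have hh' : h ≤ h' := le_top.trans <| hsup.ge.trans <| iSup_le fun j =>
      ((hirr j).le_or_le hZ' hc).resolve_left (hG j)
    exact hne (eq_bot_iff.2 (hc.2.2 ▸ le_inf le_rfl hh'))
  exact ⟨j, ((hmin _ hj (hcplx j).1).resolve_left (hirr j).2.1).symm⟩

/-- If `g` (with no non-zero abelian factor) decomposes orthogonally into irreducible
factors `gⱼ`, then any orthogonal bi-invariant complex structure `J` preserves each
`gⱼ`, and the `(gⱼ, J|_{gⱼ})` are exactly the irreducible complex factors of `(g,J)`. -/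
theorem stmt15 (g : Type*) [LieRing g] [LieAlgebra ℝ g] [Inner ℝ g]
    [MetricLieAlgebra g] [Module.Finite ℝ g]
    (hZ : ∀ x : g, (∀ y : g, ⁅x, y⁆ = 0) →
      x ∈ ⁅(⊤ : LieIdeal ℝ g), (⊤ : LieIdeal ℝ g)⁆)
    (k : ℕ) (G : Fin k → LieIdeal ℝ g)
    (hirr : ∀ j, IsIrreducibleFactor (G j))
    (horth : ∀ i j, i ≠ j → ∀ x ∈ G i, ∀ y ∈ G j, ⟪x, y⟫ = 0)
    (hsup : (⨆ j, G j) = ⊤)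
    (J : g →ₗ[ℝ] g) (hJ : IsOrthBiinvCplxStruct J) :
    (∀ j, ∀ x ∈ G j, J x ∈ G j) ∧
    (∀ j, IsComplexIrreducibleFactor J (G j)) ∧
    (∀ h : LieIdeal ℝ g, IsComplexIrreducibleFactor J h → ∃ j, h = G j) :=
  stmt15_general g hZ k G hirr hsup J hJ
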